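/- arXiv:2105.06675 — 3 statements merged into one kernel-verified Lean document; each statement's English description precedes it below -/
import Mathlib

section
/- Let D be a 3-dimensional non-isotropic subspace of ℂ⁶ and set ℓ := D ∩ D^⊥ (a line). If L is a Lagrangian subspace of ℂ⁶ with dim(L ∩ D) = 2, then ℓ ⊆ L ⊆ ℓ^⊥. -/
open scoped Matrix

noncomputable section

/-- The matrix of the standard symplectic form on `ℂ⁶`:
`J = [[0, I₃], [-I₃, 0]]`, so that `ω(eᵢ, e_{i+3}) = 1` for `i = 1, 2, 3`. -/
def J : Matrix (Fin 6) (Fin 6) ℂ :=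
  Matrix.of fun i j => if (i : ℕ) + 3 = (j : ℕ) then 1 else if (j : ℕ) + 3 = (i : ℕ) then -1 else 0

/-- The standard symplectic form `ω(u, v) = uᵀ J v` on `ℂ⁶`. -/
def omg (u v : Fin 6 → ℂ) : ℂ := ∑ i, ∑ j, u i * J i j * v j

/-- The symplectic orthogonal `D^⊥ = {u ∈ ℂ⁶ : ω(d, u) = 0 for all d ∈ D}` of a
subspace `D ⊆ ℂ⁶`. -/
def sorth (D : Submodule ℂ (Fin 6 → ℂ)) : Submodule ℂ (Fin 6 → ℂ) where
  carrier := {u | ∀ d ∈ D, omg d u = 0}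
  zero_mem' := by
    intro d _
    simp [omg]
  add_mem' := by
    intro a b ha hb d hd
    have h : omg d (a + b) = omg d a + omg d b := by
      simp only [omg, Pi.add_apply, mul_add]
      rw [← Finset.sum_add_distrib]
      exact Finset.sum_congr rfl fun i _ => by rw [← Finset.sum_add_distrib]
    simp only [Set.mem_setOf_eq] at *
    rw [h, ha d hd, hb d hd, add_zero]
  smul_mem' := by
    intro c a ha d hd
    have h : omg d (c • a) = c * omg d a := by
      simp only [omg, Pi.smul_apply, smul_eq_mul, Finset.mul_sum]
      exact Finset.sum_congr rfl fun i _ => Finset.sum_congr rfl fun j _ => by ring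
    simp only [Set.mem_setOf_eq] at *
    rw [h, ha d hd, mul_zero]

/-- A subspace of `ℂ⁶` is isotropic if `ω` vanishes identically on it. -/
def IsIsotropic (S : Submodule ℂ (Fin 6 → ℂ)) : Prop :=
  ∀ u ∈ S, ∀ v ∈ S, omg u v = 0

/-- A subspace of `ℂ⁶` is Lagrangian if it is isotropic of dimension `3`. -/
def IsLagrangian (S : Submodule ℂ (Fin 6 → ℂ)) : Prop :=
  IsIsotropic S ∧ Module.finrank ℂ S = 3

/-!
If the line `ℓ = D ∩ D^⊥` were not contained in `L`, then for `x ∈ ℓ \ L` the plane `L ∩ D`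
together with `x` would span the `3`-dimensional space `D`. But `L ∩ D` is isotropic and `x` is
`ω`-orthogonal to all of `D`, so `D` would be isotropic. Once `ℓ ⊆ L`, the isotropy `L ⊆ L^⊥`
gives `L ⊆ ℓ^⊥`.

Only the skew-symmetry of `ω` is needed: it makes `S ↦ S^⊥` an antitone Galois connection on
subspaces, which turns the isotropy argument into lattice bookkeeping.
-/

lemma J_swap (i j : Fin 6) : J j i = -J i j := by
  simp only [J, Matrix.of_apply]
  split_ifs <;> first | rfl | simp | omega

lemma omg_swap (u v : Fin 6 → ℂ) : omg v u = -omg u v := by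
  simp only [omg, ← Finset.sum_neg_distrib]
  rw [Finset.sum_comm]
  refine Finset.sum_congr rfl fun i _ => Finset.sum_congr rfl fun j _ => ?_
  rw [J_swap]
  ring

lemma le_sorth_comm {S T : Submodule ℂ (Fin 6 → ℂ)} : S ≤ sorth T ↔ T ≤ sorth S :=
  ⟨fun h t ht s hs => by rw [omg_swap, h hs t ht, neg_zero],
    fun h s hs t ht => by rw [omg_swap, h ht s hs, neg_zero]⟩

lemma sorth_galoisConnection :
    GaloisConnection (OrderDual.toDual ∘ sorth) (sorth ∘ OrderDual.ofDual) :=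
  fun _ _ => le_sorth_comm

lemma sorth_antitone {S T : Submodule ℂ (Fin 6 → ℂ)} (h : S ≤ T) : sorth T ≤ sorth S :=
  sorth_galoisConnection.monotone_l h

lemma sorth_sup (S T : Submodule ℂ (Fin 6 → ℂ)) : sorth (S ⊔ T) = sorth S ⊓ sorth T :=
  sorth_galoisConnection.l_sup

lemma isIsotropic_iff_le_sorth {S : Submodule ℂ (Fin 6 → ℂ)} : IsIsotropic S ↔ S ≤ sorth S :=
  ⟨fun h u hu d hd => h d hd u hu, fun h u hu _ hv => h hv u hu⟩

lemma IsIsotropic.mono {S T : Submodule ℂ (Fin 6 → ℂ)} (hT : IsIsotropic T) (h : S ≤ T) :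
    IsIsotropic S :=
  fun u hu v hv => hT u (h hu) v (h hv)

lemma isIsotropic_sup {S T : Submodule ℂ (Fin 6 → ℂ)} (hS : IsIsotropic S)
    (hT : T ≤ sorth (S ⊔ T)) : IsIsotropic (S ⊔ T) := by
  rw [isIsotropic_iff_le_sorth] at hS ⊢
  refine sup_le ?_ hT
  rw [sorth_sup]
  exact le_inf hS (le_sorth_comm.1 (hT.trans (sorth_antitone le_sup_left)))

/-- Let `D` be a `3`-dimensional non-isotropic subspace of `ℂ⁶` and set
`ℓ := D ∩ D^⊥` (a line).  If `L` is a Lagrangian subspace of `ℂ⁶` with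
`dim (L ∩ D) = 2`, then `ℓ ⊆ L ⊆ ℓ^⊥`. -/
theorem statement_4 (D : Submodule ℂ (Fin 6 → ℂ))
    (hD : Module.finrank ℂ D = 3) (hiso : ¬ IsIsotropic D)
    (L : Submodule ℂ (Fin 6 → ℂ)) (hL : IsLagrangian L)
    (hLD : Module.finrank ℂ ↥(L ⊓ D) = 2) :
    D ⊓ sorth D ≤ L ∧ L ≤ sorth (D ⊓ sorth D) := by
  have hℓL : D ⊓ sorth D ≤ L := by
    rintro x ⟨hxD, hxD'⟩
    by_contra hxL
    have hxLD : x ∉ L ⊓ D := fun h => hxL h.1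
    have hspan : L ⊓ D ⊔ ℂ ∙ x = D :=
      Submodule.eq_of_le_of_finrank_le
        (sup_le inf_le_right ((Submodule.span_singleton_le_iff_mem x D).2 hxD))
        (by rw [Submodule.finrank_sup_span_singleton hxLD]; omega)
    refine hiso (hspan ▸ isIsotropic_sup (hL.1.mono inf_le_left) ?_)
    rwa [hspan, Submodule.span_singleton_le_iff_mem]
  exact ⟨hℓL, (isIsotropic_iff_le_sorth.1 hL.1).trans (sorth_antitone hℓL)⟩
end
end

section
/- For a ∈ ℂ⁶, let η_a be the totally antisymmetric array η_a(i,j,k) := a_i·J(j,k) + a_j·J(k,i) + a_k·J(i,j), encoding the 3-form α ∧ ω, where α = Σ a_i x^i. Then q(η_a)(b,c) = 4·a_b·a_c for all b, c ∈ {1,…,6}; in particular, for a ≠ 0 the KLR contraction of α ∧ ω is a rank-one symmetric matrix proportional to the square of α. -/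
/-!
With the first slot fixed, `η_a(b, ·, ·) = a_b J + a ⊗ Jᵀ_b + J_b ⊗ a` is `J` plus two rank-one
tensors. The KLR contraction is bilinear in these slices and only sees that `J` is antisymmetric
with inverse `W` (indeed `W = -J = J⁻¹`): it pairs `J` with `J` to the dimension `6`, `J` with
`x ⊗ y` to `W(y, x)`, and `x ⊗ y` with `z ⊗ w` to `W(x, z) W(y, w)`, while `W` pairs a row or
column of `J` with any vector to a coordinate of that vector. Collecting the nine terms gives
`(6 - 2) a_b a_c`.
-/

open scoped Matrix

noncomputable section

/-- The matrix `W = -J`, so `W(i, i+3) = -1` and `W(i+3, i) = 1` for `i = 1, 2, 3`. -/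
def W : Matrix (Fin 6) (Fin 6) ℂ := -J

/-- A totally antisymmetric array `η : {1,…,6}³ → ℂ`: it changes sign under the
transposition of any two of its three arguments. -/
def IsAlt (η : Fin 6 → Fin 6 → Fin 6 → ℂ) : Prop :=
  (∀ i j k, η j i k = -η i j k) ∧ (∀ i j k, η i k j = -η i j k) ∧
    (∀ i j k, η k j i = -η i j k)

/-- An array `η` is effective if `Σ_{i,j} W(i,j) · η(i,j,k) = 0` for every `k`. -/
def IsEff (η : Fin 6 → Fin 6 → Fin 6 → ℂ) : Prop :=
  ∀ k, (∑ i, ∑ j, W i j * η i j k) = 0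

/-- The KLR contraction of a `3`-form `η`: the symmetric `6 × 6` matrix with entries
`q(η)(a,b) = Σ_{i,j,h,k} η(a,i,j) · η(b,h,k) · W(i,h) · W(j,k)`. -/
def klr (η : Fin 6 → Fin 6 → Fin 6 → ℂ) : Matrix (Fin 6) (Fin 6) ℂ :=
  Matrix.of fun a b => ∑ i, ∑ j, ∑ h, ∑ k, η a i j * η b h k * W i h * W j k

/-- The array `η_a(i,j,k) = a_i · J(j,k) + a_j · J(k,i) + a_k · J(i,j)`, encoding the
3-form `α ∧ ω` where `α = Σ a_i x^i`. -/
def etaWedge (a : Fin 6 → ℂ) : Fin 6 → Fin 6 → Fin 6 → ℂ :=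
  fun i j k => a i * J j k + a j * J k i + a k * J i j

namespace Matrix

variable {ι R : Type*} [Fintype ι] [CommRing R]

lemma trace_vecMulVec_mul (Q : Matrix ι ι R) (x y : ι → R) :
    trace (vecMulVec x y * Q) = y ⬝ᵥ Q *ᵥ x := by
  rw [vecMulVec_mul, trace_vecMulVec, dotProduct_comm, dotProduct_mulVec]

lemma dotProduct_mulVec_self_eq_neg {Q : Matrix ι ι R} (hQ : Qᵀ = -Q) (x : ι → R) :
    x ⬝ᵥ Q *ᵥ x = -(x ⬝ᵥ Q *ᵥ x) := by
  rw [← dotProduct_neg, ← neg_mulVec, ← hQ, mulVec_transpose, dotProduct_mulVec, dotProduct_comm]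

section Inverse

variable [DecidableEq ι] {ω Q : Matrix ι ι R}

lemma transpose_eq_neg_of_mul_eq_one (hω : ωᵀ = -ω) (hQ : ω * Q = 1) : Qᵀ = -Q :=
  calc Qᵀ = Qᵀ * (ω * Q) := by rw [hQ, Matrix.mul_one]
    _ = (ωᵀ * Q)ᵀ * Q := by rw [transpose_mul, transpose_transpose, Matrix.mul_assoc]
    _ = -Q := by rw [hω, Matrix.neg_mul, hQ, transpose_neg, transpose_one, Matrix.neg_mul,
      Matrix.one_mul]

lemma row_dotProduct_mulVec (hQ : ω * Q = 1) (b : ι) (z : ι → R) : ω b ⬝ᵥ Q *ᵥ z = z b := by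
  rw [dotProduct_mulVec, ← mul_apply_eq_vecMul, hQ]
  simp [dotProduct, one_apply]

lemma dotProduct_mulVec_col (hQ : ω * Q = 1) (c : ι) (z : ι → R) : z ⬝ᵥ Q *ᵥ ωᵀ c = z c := by
  rw [← vecMul_transpose, ← mul_apply_eq_vecMul, ← transpose_mul, mul_eq_one_comm.mp hQ]
  simp [dotProduct, one_apply]

lemma col_dotProduct_mulVec (hω : ωᵀ = -ω) (hQ : ω * Q = 1) (b : ι) (z : ι → R) :
    ωᵀ b ⬝ᵥ Q *ᵥ z = -z b := by
  rw [hω]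
  exact (neg_dotProduct (ω b) _).trans (congrArg _ (row_dotProduct_mulVec hQ b z))

lemma dotProduct_mulVec_row (hω : ωᵀ = -ω) (hQ : ω * Q = 1) (c : ι) (z : ι → R) :
    z ⬝ᵥ Q *ᵥ ω c = -z c := by
  rw [← neg_neg ω, ← hω]
  exact (congrArg _ (mulVec_neg (ωᵀ c) Q)).trans
    ((dotProduct_neg _ _).trans (congrArg _ (dotProduct_mulVec_col hQ c z)))

end Inverse

theorem rank_pos_of_ne_zero {K m n : Type*} [Field K] [Fintype n] {A : Matrix m n K}
    (hA : A ≠ 0) : 0 < A.rank := by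
  classical
  rw [Nat.pos_iff_ne_zero, rank, Ne, Submodule.finrank_eq_zero, LinearMap.range_eq_bot,
    ← toLin'_apply', ← toLin'.map_zero, toLin'.injective.eq_iff]
  exact hA

theorem rank_vecMulVec_eq_one {K n : Type*} [Field K] [Fintype n] {w v : n → K}
    (hw : w ≠ 0) (hv : v ≠ 0) : (vecMulVec w v).rank = 1 :=
  le_antisymm (rank_vecMulVec_le w v) (rank_pos_of_ne_zero (vecMulVec_ne_zero hw hv))

end Matrix

section Contraction

open Matrix

variable {ι R : Type*} [CommRing R]

def wedgeForm (ω : Matrix ι ι R) (a : ι → R) (i j k : ι) : R :=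
  a i * ω j k + a j * ω k i + a k * ω i j

lemma wedgeForm_apply (ω : Matrix ι ι R) (a : ι → R) (b : ι) :
    wedgeForm ω a b = a b • ω + vecMulVec a (ωᵀ b) + vecMulVec (ω b) a := by
  ext i j
  simp only [wedgeForm, Matrix.add_apply, Matrix.smul_apply, smul_eq_mul, vecMulVec_apply,
    transpose_apply]
  ring

variable [Fintype ι]

def klrPairing (Q : Matrix ι ι R) : Matrix ι ι R →ₗ[R] Matrix ι ι R →ₗ[R] R :=
  LinearMap.mk₂ R (fun X Y => ∑ i, ∑ j, ∑ h, ∑ k, X i j * Y h k * Q i h * Q j k)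
    (fun X X' Y => by simp only [Matrix.add_apply, add_mul, Finset.sum_add_distrib])
    (fun c X Y => by simp only [Matrix.smul_apply, smul_eq_mul, Finset.mul_sum, mul_assoc])
    (fun X Y Y' => by simp only [Matrix.add_apply, mul_add, add_mul, Finset.sum_add_distrib])
    (fun c X Y => by
      simp only [Matrix.smul_apply, smul_eq_mul, Finset.mul_sum, mul_left_comm c, mul_assoc])

lemma klrPairing_apply (Q X Y : Matrix ι ι R) :
    klrPairing Q X Y = ∑ i, ∑ j, ∑ h, ∑ k, X i j * Y h k * Q i h * Q j k := rfl

lemma klrPairing_eq_trace (Q X Y : Matrix ι ι R) :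
    klrPairing Q X Y = trace (Xᵀ * Q * Y * Qᵀ) := by
  simp only [klrPairing_apply, trace, diag, mul_apply, transpose_apply, Finset.sum_mul]
  rw [Finset.sum_comm]
  refine Finset.sum_congr rfl fun j _ => ?_
  rw [Finset.sum_comm]
  refine (Finset.sum_congr rfl fun h _ => Finset.sum_comm).trans ?_
  rw [Finset.sum_comm]
  exact Finset.sum_congr rfl fun _ _ => Finset.sum_congr rfl fun _ _ =>
    Finset.sum_congr rfl fun _ _ => by ring

lemma klrPairing_vecMulVec (Q : Matrix ι ι R) (x y z w : ι → R) :
    klrPairing Q (vecMulVec x y) (vecMulVec z w) = (x ⬝ᵥ Q *ᵥ z) * (y ⬝ᵥ Q *ᵥ w) := by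
  calc klrPairing Q (vecMulVec x y) (vecMulVec z w)
      = ∑ i, ∑ h, ∑ j, ∑ k, (x i * Q i h * z h) * (y j * Q j k * w k) := by
        simp only [klrPairing_apply, vecMulVec_apply]
        refine Finset.sum_congr rfl fun i _ => ?_
        rw [Finset.sum_comm]
        exact Finset.sum_congr rfl fun _ _ => Finset.sum_congr rfl fun _ _ =>
          Finset.sum_congr rfl fun _ _ => by ring
    _ = (∑ i, ∑ h, x i * Q i h * z h) * (∑ j, ∑ k, y j * Q j k * w k) := by
        simp_rw [Finset.sum_mul, Finset.mul_sum]
    _ = (x ⬝ᵥ Q *ᵥ z) * (y ⬝ᵥ Q *ᵥ w) := by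
        simp only [dotProduct, mulVec, Finset.mul_sum, mul_assoc]

variable [DecidableEq ι] {ω Q : Matrix ι ι R}

lemma klrPairing_left_of_mul_eq_one (hω : ωᵀ = -ω) (hQ : ω * Q = 1) (Y : Matrix ι ι R) :
    klrPairing Q ω Y = trace (Y * Q) := by
  rw [klrPairing_eq_trace, hω, transpose_eq_neg_of_mul_eq_one hω hQ]
  simp [hQ]

lemma klrPairing_right_of_mul_eq_one (hQ : ω * Q = 1) (X : Matrix ι ι R) :
    klrPairing Q X ω = trace (X * Q) := by
  rw [klrPairing_eq_trace, Matrix.mul_assoc Xᵀ, mul_eq_one_comm.mp hQ, Matrix.mul_one,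
    ← transpose_mul, trace_transpose, trace_mul_comm]

theorem klrPairing_wedgeForm (hω : ωᵀ = -ω) (hQ : ω * Q = 1) (a : ι → R) (b c : ι) :
    klrPairing Q (wedgeForm ω a b) (wedgeForm ω a c) = (Fintype.card ι - 2 : R) * a b * a c := by
  have haa := dotProduct_mulVec_self_eq_neg (transpose_eq_neg_of_mul_eq_one hω hQ) a
  simp only [wedgeForm_apply, map_add, map_smul, LinearMap.add_apply, LinearMap.smul_apply,
    klrPairing_left_of_mul_eq_one hω hQ, klrPairing_right_of_mul_eq_one hQ, klrPairing_vecMulVec,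
    trace_vecMulVec_mul, hQ, trace_one, row_dotProduct_mulVec hQ, dotProduct_mulVec_col hQ,
    col_dotProduct_mulVec hω hQ, dotProduct_mulVec_row hω hQ, smul_eq_mul, transpose_apply]
  -- the leftover is `2 (a ⬝ᵥ Q *ᵥ a) ω c b`, and `a ⬝ᵥ Q *ᵥ a` need not vanish in characteristic 2
  linear_combination ω c b * haa

end Contraction

lemma J_transpose : Jᵀ = -J := by
  ext i j
  simp only [J, Matrix.transpose_apply, Matrix.neg_apply, Matrix.of_apply]
  split_ifs <;> first | omega | norm_num

lemma J_mul_W : J * W = 1 := by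
  ext i j
  fin_cases i <;> fin_cases j <;> simp [W, J, Matrix.mul_apply, Fin.sum_univ_six]

lemma klr_etaWedge_apply (a : Fin 6 → ℂ) (b c : Fin 6) :
    klr (etaWedge a) b c = 4 * a b * a c :=
  calc klr (etaWedge a) b c = klrPairing W (wedgeForm J a b) (wedgeForm J a c) := rfl
    _ = ((Fintype.card (Fin 6) : ℂ) - 2) * a b * a c :=
      klrPairing_wedgeForm J_transpose J_mul_W a b c
    _ = 4 * a b * a c := by norm_num

/-- For the 3-form `α ∧ ω` one has `q(η_a)(b,c) = 4 · a_b · a_c`; in particular, for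
`a ≠ 0` the KLR contraction of `α ∧ ω` is a rank-one symmetric matrix proportional to
the square of `α`. -/
theorem statement_14 :
    (∀ a : Fin 6 → ℂ, ∀ b c : Fin 6, klr (etaWedge a) b c = 4 * a b * a c) ∧
    (∀ a : Fin 6 → ℂ, a ≠ 0 → (klr (etaWedge a)).rank = 1) := by
  refine ⟨klr_etaWedge_apply, fun a ha => ?_⟩
  have hklr : klr (etaWedge a) = Matrix.vecMulVec (2 • a) (2 • a) := by
    ext b c
    rw [klr_etaWedge_apply, Matrix.vecMulVec_apply, Pi.smul_apply, Pi.smul_apply, nsmul_eq_mul]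
    ring
  have h2a : 2 • a ≠ 0 := smul_ne_zero two_ne_zero ha
  rw [hklr, Matrix.rank_vecMulVec_eq_one h2a h2a]
end
end

section
/- If v₁, v₂, v₃ ∈ ℂ⁶ span an isotropic subspace (ω(v_m, v_n) = 0 for all m, n ∈ {1,2,3}), then their Plücker array η is effective and satisfies q(η) = 0. (Hence the cone over the Lagrangian Grassmannian LG(3,6), in its Plücker embedding into the space of effective 3-forms, is contained in the zero locus of the moment map.) -/
open scoped Matrix

noncomputable section

/-- The Plücker array of vectors `v₁, v₂, v₃ ∈ ℂ⁶`: its `(i,j,k)` entry is the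
determinant of the `3 × 3` matrix whose `m`-th row is `((v_m)_i, (v_m)_j, (v_m)_k)`. -/
def plk (v : Fin 3 → Fin 6 → ℂ) : Fin 6 → Fin 6 → Fin 6 → ℂ :=
  fun i j k => Matrix.det (Matrix.of fun m n => v m (![i, j, k] n))

/-!
Expanding the determinant, `η = Σ_σ sign σ · v_{σ 0} ⊗ v_{σ 1} ⊗ v_{σ 2}`, so contracting two
slots of `η` against a matrix `M` only sees the values `v_m ⬝ M v_n` of the bilinear form of `M`
on the vectors. For `M = W` these are `-ω(v_m, v_n) = 0`, which gives effectiveness. The entry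
`q(η)(a, b)` is the contraction of `η(a, ·, ·)` against `W N Wᵀ` with `N = η(b, ·, ·)`, and
`v_m ⬝ W N Wᵀ v_n` is a contraction of `η(b, ·, ·)` against a rank-one matrix whose left factor
`Wᵀ v_m` is dot-orthogonal to every `v_p`, by isotropy again.
-/

open Matrix Equiv

lemma plk_permute (v : Fin 3 → Fin 6 → ℂ) (i j k : Fin 6) (τ : Perm (Fin 3)) :
    plk v (![i, j, k] (τ 0)) (![i, j, k] (τ 1)) (![i, j, k] (τ 2)) = τ.sign * plk v i j k := by
  rw [plk, plk, ← det_permute']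
  congr
  ext m n
  fin_cases n <;> rfl

lemma isAlt_plk (v : Fin 3 → Fin 6 → ℂ) : IsAlt (plk v) := by
  refine ⟨fun i j k => ?_, fun i j k => ?_, fun i j k => ?_⟩
  · simpa [swap_apply_of_ne_of_ne] using plk_permute v i j k (swap 0 1)
  · simpa [swap_apply_of_ne_of_ne] using plk_permute v i j k (swap 1 2)
  · simpa [swap_apply_of_ne_of_ne] using plk_permute v i j k (swap 0 2)

lemma plk_apply_eq_sum_perm (v : Fin 3 → Fin 6 → ℂ) (i j k : Fin 6) :
    plk v i j k = ∑ σ : Perm (Fin 3), σ.sign • (v (σ 0) i * v (σ 1) j * v (σ 2) k) := by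
  simp [plk, det_apply, Fin.prod_univ_three]

lemma sum_plk_mul (v : Fin 3 → Fin 6 → ℂ) (a : Fin 6) (M : Matrix (Fin 6) (Fin 6) ℂ) :
    ∑ i, ∑ j, plk v a i j * M i j =
      ∑ σ : Perm (Fin 3), σ.sign • (v (σ 0) a * (v (σ 1) ⬝ᵥ M *ᵥ v (σ 2))) := by
  simp only [plk_apply_eq_sum_perm, Finset.sum_mul, dotProduct, mulVec, Finset.mul_sum,
    Finset.smul_sum]
  conv_lhs => enter [2, i]; rw [Finset.sum_comm]
  rw [Finset.sum_comm]
  refine Finset.sum_congr rfl fun σ _ => Finset.sum_congr rfl fun i _ =>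
    Finset.sum_congr rfl fun j _ => ?_
  simp only [Units.smul_def, zsmul_eq_mul]
  ring

lemma sum_plk_mul_eq_zero {v : Fin 3 → Fin 6 → ℂ} {M : Matrix (Fin 6) (Fin 6) ℂ}
    (hM : ∀ m n, v m ⬝ᵥ M *ᵥ v n = 0) (a : Fin 6) : ∑ i, ∑ j, plk v a i j * M i j = 0 := by
  rw [sum_plk_mul]
  exact Finset.sum_eq_zero fun σ _ => by rw [hM, mul_zero, smul_zero]

lemma dotProduct_plk_mulVec_eq_zero {v : Fin 3 → Fin 6 → ℂ} {x : Fin 6 → ℂ}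
    (hx : ∀ m, v m ⬝ᵥ x = 0) (b : Fin 6) (y : Fin 6 → ℂ) :
    x ⬝ᵥ (of fun h k => plk v b h k) *ᵥ y = 0 := by
  rw [← toBilin'_apply', toBilin'_apply, ← sum_plk_mul_eq_zero (M := vecMulVec x y) _ b]
  · exact Finset.sum_congr rfl fun h _ => Finset.sum_congr rfl fun k _ => by
      simp only [of_apply, vecMulVec_apply]; ring
  · intro m n
    simp [vecMulVec_mulVec, hx]

lemma dotProduct_W_mulVec (u w : Fin 6 → ℂ) : u ⬝ᵥ W *ᵥ w = -omg u w := by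
  rw [W, neg_mulVec, dotProduct_neg, ← toBilin'_apply', toBilin'_apply, omg]

lemma isEff_plk {v : Fin 3 → Fin 6 → ℂ} (hv : ∀ m n, omg (v m) (v n) = 0) : IsEff (plk v) := by
  intro k
  obtain ⟨-, h₂, h₃⟩ := isAlt_plk v
  have hcyc : ∀ i j, plk v i j k = plk v k i j := fun i j => by
    rw [← neg_inj, ← h₃, h₂]
  simp_rw [hcyc, mul_comm (W _ _)]
  refine sum_plk_mul_eq_zero (fun m n => ?_) k
  rw [dotProduct_W_mulVec, hv, neg_zero]

lemma klr_plk_apply (v : Fin 3 → Fin 6 → ℂ) (a b : Fin 6) :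
    klr (plk v) a b = ∑ i, ∑ j, plk v a i j * (W * (of fun h k => plk v b h k) * Wᵀ) i j := by
  simp only [klr, of_apply, mul_apply, transpose_apply, Finset.mul_sum, Finset.sum_mul]
  refine Finset.sum_congr rfl fun i _ => Finset.sum_congr rfl fun j _ => ?_
  rw [Finset.sum_comm]
  exact Finset.sum_congr rfl fun h _ => Finset.sum_congr rfl fun k _ => by ring

lemma klr_plk {v : Fin 3 → Fin 6 → ℂ} (hv : ∀ m n, omg (v m) (v n) = 0) : klr (plk v) = 0 := by
  ext a b
  rw [klr_plk_apply, Matrix.zero_apply]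
  refine sum_plk_mul_eq_zero (fun m n => ?_) a
  rw [← mulVec_mulVec, ← mulVec_mulVec, dotProduct_mulVec, mulVec_transpose]
  refine dotProduct_plk_mulVec_eq_zero (fun p => ?_) b _
  rw [dotProduct_comm, ← dotProduct_mulVec, dotProduct_W_mulVec, hv, neg_zero]

/-- If `v₁, v₂, v₃ ∈ ℂ⁶` span an isotropic subspace, their Plücker array `η` is
effective and satisfies `q(η) = 0`: the cone over the Lagrangian Grassmannian
`LG(3,6)`, in its Plücker embedding into the space of effective 3-forms, is
contained in the zero locus of the moment map. -/
theorem statement_15 (v : Fin 3 → Fin 6 → ℂ)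
    (hv : ∀ m n : Fin 3, omg (v m) (v n) = 0) :
    IsAlt (plk v) ∧ IsEff (plk v) ∧ klr (plk v) = 0 :=
  ⟨isAlt_plk v, isEff_plk hv, klr_plk hv⟩
end
end
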